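/- arXiv:2408.17398 — 2 statements merged into one kernel-verified Lean document; each statement's English description precedes it below -/
import Mathlib

section
/- Suppose V(μ,·) is single-peaked with peak l̂_V(μ), U(μ,·) is single-peaked with peak l̂_U(μ), both peaks are continuous and increasing in μ, and l̂_V(μ) < l̂_U(μ) for interior μ. If a learning process stops providing information at some interior belief μ̄ at level s with s ≥ l̂_U(μ̄), then there exists ε > 0 and a belief μ* + ε > μ̄ such that splitting μ̄ into the mixture of posteriors 0 and μ*+ε (with the Bayes-plausible weights p₀·0 + (1−p₀)(μ*+ε) = μ̄) strictly decreases the principal's expected payoff: V(μ̄, s) > p₀·V(0,s) + (1−p₀)·V(μ*+ε, l̂_U(μ*+ε)), using linearity of V(·,s) in μ and single-peakedness of V(μ*+ε, ·) with l̂_V(μ*+ε) < s < l̂_U(μ*+ε). -/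
/-! Since `lV μ* < lU μ* = s`, continuity of `lV` lets us move the upper posterior slightly
above `μ*` while keeping `lV < s`, and strict monotonicity of `lU` puts `s` strictly below
`lU` there. At that belief `V(μ*+ε, ·)` is strictly decreasing on `[lV(μ*+ε), ∞)`, so moving
the level from `s` up to `lU(μ*+ε)` strictly lowers it; affinity of `V(·, s)` makes the split
with level `s` on both posteriors payoff-neutral, hence the actual split is strictly worse. -/

open Topology in
lemma exists_pos_add_lt_of_continuousAt {f : ℝ → ℝ} {x b c : ℝ} (hf : ContinuousAt f x)
    (hfx : f x < c) (hxb : x < b) : ∃ ε > 0, x + ε < b ∧ f (x + ε) < c := by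
  have hlt : ∀ᶠ y in 𝓝[>] x, f y < c :=
    (hf.eventually_lt continuousAt_const hfx).filter_mono nhdsWithin_le_nhds
  have hIoo : ∀ᶠ y in 𝓝[>] x, y ∈ Set.Ioo x b := Ioo_mem_nhdsGT hxb
  obtain ⟨y, ⟨hxy, hyb⟩, hfy⟩ := (hIoo.and hlt).exists
  exact ⟨y - x, sub_pos.2 hxy, by linarith, by simpa using hfy⟩

lemma affine_eq_mix_zero {v0 v1 : ℝ → ℝ} {V : ℝ → ℝ → ℝ}
    (hV : ∀ μ l, V μ l = μ * v1 l + (1 - μ) * v0 l) (p μ l : ℝ) :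
    V ((1 - p) * μ) l = p * V 0 l + (1 - p) * V μ l := by
  simp only [hV]
  ring

lemma mix_lt_of_lt {a b b' p : ℝ} (hp : p < 1) (hb : b' < b) :
    p * a + (1 - p) * b' < p * a + (1 - p) * b := by
  have := mul_lt_mul_of_pos_left hb (sub_pos.2 hp)
  linarith

theorem stmt11_general (v0 v1 : ℝ → ℝ) (V : ℝ → ℝ → ℝ)
    (hV : ∀ μ l, V μ l = μ * v1 l + (1 - μ) * v0 l)
    (lU lV : ℝ → ℝ) (hVc : Continuous lV)
    (hUm : StrictMono lU)
    (hpeak : ∀ μ, StrictAntiOn (fun l => V μ l) (Set.Ici (lV μ)))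
    (μbar μstar s : ℝ) (hμ1 : μstar < 1)
    (hgap : lV μstar < lU μstar) (hs : lU μstar = s) :
    ∃ ε > 0, μstar + ε < 1 ∧ lV (μstar + ε) < s ∧ s < lU (μstar + ε) ∧
      ∀ p0 : ℝ, 0 ≤ p0 → p0 < 1 → (1 - p0) * (μstar + ε) = μbar →
        V μbar s > p0 * V 0 s + (1 - p0) * V (μstar + ε) (lU (μstar + ε)) := by
  subst hs
  obtain ⟨ε, hε, hε1, hVs⟩ := exists_pos_add_lt_of_continuousAt hVc.continuousAt hgap hμ1
  have hsU : lU μstar < lU (μstar + ε) := hUm (lt_add_of_pos_right μstar hε)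
  refine ⟨ε, hε, hε1, hVs, hsU, fun p0 _ hp1 hmix => ?_⟩
  have hdrop : V (μstar + ε) (lU (μstar + ε)) < V (μstar + ε) (lU μstar) :=
    hpeak (μstar + ε) (Set.mem_Ici.2 hVs.le) (Set.mem_Ici.2 (hVs.trans hsU).le) hsU
  rw [← hmix, affine_eq_mix_zero hV]
  exact mix_lt_of_lt hp1 hdrop

/-- The splitting step of Lemma A.1.  Binary state, `V(μ,l) = μ v1(l) +
(1−μ) v0(l)` affine in the belief; `l̂_U` (the agent's peak) is continuous and strictly
increasing, `l̂_V` (the principal's peak) is continuous, and `V(μ,·)` is strictly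
decreasing past its peak `l̂_V(μ)`.  If a learning process stops providing information at
an interior belief `μbar` at level `s ≥ l̂_U(μbar)`, with `μ* = max{μ : l̂_U(μ) = s}` (so
`μbar ≤ μ*`, `l̂_U(μ*) = s`, and `l̂_V(μ*) < s`), then there exists `ε > 0` with
`l̂_V(μ*+ε) < s < l̂_U(μ*+ε)` such that splitting `μbar` into the Bayes-plausible mixture
`p0·0 + (1−p0)(μ*+ε) = μbar` strictly decreases the principal's payoff:
`V(μbar, s) > p0·V(0,s) + (1−p0)·V(μ*+ε, l̂_U(μ*+ε))`. -/
theorem stmt11 (v0 v1 : ℝ → ℝ) (V : ℝ → ℝ → ℝ)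
    (hV : ∀ μ l, V μ l = μ * v1 l + (1 - μ) * v0 l)
    (lU lV : ℝ → ℝ) (hUc : Continuous lU) (hVc : Continuous lV)
    (hUm : StrictMono lU)
    (hpeak : ∀ μ, StrictAntiOn (fun l => V μ l) (Set.Ici (lV μ)))
    (μbar μstar s : ℝ) (hμbar0 : 0 < μbar) (hμle : μbar ≤ μstar) (hμ1 : μstar < 1)
    (hgap : lV μstar < lU μstar) (hs : lU μstar = s) :
    ∃ ε > 0, μstar + ε < 1 ∧ lV (μstar + ε) < s ∧ s < lU (μstar + ε) ∧
      ∀ p0 : ℝ, 0 ≤ p0 → p0 < 1 → (1 - p0) * (μstar + ε) = μbar →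
        V μbar s > p0 * V 0 s + (1 - p0) * V (μstar + ε) (lU (μstar + ε)) :=
  stmt11_general v0 v1 V hV lU lV hVc hUm hpeak μbar μstar s hμ1 hgap hs
end

section
/- Consider the discrete-time sup-inf problem: sup over mechanisms φ : {0,...,N} → ℝ ∪ {+∞} of inf over all finite belief martingales (μ_t)_{t=0}^N (with values in Δ({0,1}) and μ at t=0 equal to prior μ₀) of E[V(μ_τ, τ) + φ(τ)], where τ is the agent's optimal stopping time for E[U(μ_τ, τ) − φ(τ)] subject to participation E[U(μ_τ,τ) − φ(τ)] ≥ U(μ₀,0) (else τ = 0 and payoffs are V(μ₀,0), U(μ₀,0)). Then the value of this problem equals max_{t ∈ {0,...,N}} [U(μ₀,t) − U(μ₀,0) + V(μ₀,t)], and it is attained by the hard-quota mechanism φ(t) = λ* for t ≤ T* and +∞ for t > T*, where T* attains the max and λ* = U(μ₀,T*) − U(μ₀,0). -/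
open scoped Classical

noncomputable section

/-- A finite belief martingale on horizon `{0,…,N}` with prior `μ0 ∈ [0,1]` (binary state:
`bel t ω` is the probability of state `θ = 1`), on a finite sample space `Fin n`, adapted
to its own filtration: conditional on the belief path up to time `t`, the expectation of
`bel (t+1)` is `bel t`. -/
structure FinBeliefMart (N : ℕ) (μ0 : ℝ) where
  n : ℕ
  npos : 0 < n
  P : Fin n → ℝ
  Pnn : ∀ ω, 0 ≤ P ω
  Psum : ∑ ω, P ω = 1
  bel : ℕ → Fin n → ℝ
  mem : ∀ t ω, bel t ω ∈ Set.Icc (0:ℝ) 1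
  init : ∀ ω, bel 0 ω = μ0
  mart : ∀ t ω,
    (∑ ω', if (∀ s ≤ t, bel s ω' = bel s ω) then P ω' * bel (t + 1) ω' else 0)
      = bel t ω * (∑ ω', if (∀ s ≤ t, bel s ω' = bel s ω) then P ω' else 0)

/-- Expected payoff `U(μ,t) = μ u(1,t) + (1−μ) u(0,t)` at belief `μ`. -/
def EU (u : Bool → ℕ → ℝ) (μ : ℝ) (t : ℕ) : ℝ := μ * u true t + (1 - μ) * u false t

/-- A stopping time adapted to the filtration generated by the belief path. -/
def IsAdapted {N : ℕ} {μ0 : ℝ} (M : FinBeliefMart N μ0) (τ : Fin M.n → ℕ) : Prop :=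
  ∀ ω ω', (∀ s ≤ τ ω, M.bel s ω' = M.bel s ω) → τ ω' = τ ω

/-- Feasibility for mechanism with allowed stopping set `A` (`t ∉ A` encodes `φ(t) = +∞`). -/
def Feasible {N : ℕ} {μ0 : ℝ} (M : FinBeliefMart N μ0) (A : Set ℕ) (τ : Fin M.n → ℕ) : Prop :=
  IsAdapted M τ ∧ ∀ ω, τ ω ≤ N ∧ τ ω ∈ A

/-- Agent's expected payoff under transfer `φ`. -/
def agentPay (u : Bool → ℕ → ℝ) {N : ℕ} {μ0 : ℝ} (M : FinBeliefMart N μ0)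
    (φ : ℕ → ℝ) (τ : Fin M.n → ℕ) : ℝ :=
  ∑ ω, M.P ω * (EU u (M.bel (τ ω) ω) (τ ω) - φ (τ ω))

/-- Principal's expected payoff under transfer `φ`. -/
def prinPay (v : Bool → ℕ → ℝ) {N : ℕ} {μ0 : ℝ} (M : FinBeliefMart N μ0)
    (φ : ℕ → ℝ) (τ : Fin M.n → ℕ) : ℝ :=
  ∑ ω, M.P ω * (EU v (M.bel (τ ω) ω) (τ ω) + φ (τ ω))

/-- Agent best response: a feasible optimal stopping time, breaking ties toward larger
stopping times (it pointwise dominates every other optimum). -/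
def AgentBR (u : Bool → ℕ → ℝ) {N : ℕ} {μ0 : ℝ} (M : FinBeliefMart N μ0)
    (φ : ℕ → ℝ) (A : Set ℕ) (τ : Fin M.n → ℕ) : Prop :=
  Feasible M A τ ∧
    (∀ τ', Feasible M A τ' → agentPay u M φ τ' ≤ agentPay u M φ τ) ∧
    (∀ τ', Feasible M A τ' → agentPay u M φ τ' = agentPay u M φ τ → ∀ ω, τ' ω ≤ τ ω)

/-- The principal's realized payoff `x` under mechanism `(φ, A)` and learning process `M`:
if the agent's optimal value clears the participation threshold `U(μ0,0)` she plays a best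
response; otherwise she does not participate and payoffs are `V(μ0,0)`, `U(μ0,0)`. -/
def Outcome (u v : Bool → ℕ → ℝ) (N : ℕ) (μ0 : ℝ) (φ : ℕ → ℝ) (A : Set ℕ)
    (M : FinBeliefMart N μ0) (x : ℝ) : Prop :=
  (∃ τ, AgentBR u M φ A τ ∧ agentPay u M φ τ ≥ EU u μ0 0 ∧ x = prinPay v M φ τ) ∨
  ((∀ τ, Feasible M A τ → agentPay u M φ τ < EU u μ0 0) ∧ x = EU v μ0 0)

/-!
Beliefs are a martingale and `U(·,t)`, `V(·,t)` are affine, so by optional stopping the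
constant stopping time `T*` earns the agent exactly her outside option `U(μ0,0)` under the
hard quota: she participates and the principal collects `λ*` plus `E[V(μ_τ,τ)]`. Stopping at
`τ < T*` is optimal only if `U(μ_τ,·)` drops strictly right after `τ` (else the agent, who
breaks ties towards later times, would continue), so `τ` is past the peak of `U(μ_τ,·)`, hence
past that of `V(μ_τ,·)`, and `V(μ_τ,τ) ≥ V(μ_τ,T*)`; averaging gives the bound. Conversely,
if the agent learns nothing, under any mechanism she either stops at an allowed date `t` with
`φ(t) ≤ U(μ0,t) - U(μ0,0)` or stays out; either way the principal gets at most the value.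
-/

lemma sum_mul_EU {ι : Type*} (s : Finset ι) (c b : ι → ℝ) (w : Bool → ℕ → ℝ) (t : ℕ) :
    ∑ i ∈ s, c i * EU w (b i) t
      = (∑ i ∈ s, c i) * w false t + (∑ i ∈ s, c i * b i) * (w true t - w false t) := by
  rw [Finset.sum_mul, Finset.sum_mul, ← Finset.sum_add_distrib]
  exact Finset.sum_congr rfl fun i _ => by unfold EU; ring

lemma Finset.exists_max_image_largest {α β : Type*} [LinearOrder α] [LinearOrder β]
    {s : Finset β} (hs : s.Nonempty) (f : β → α) :
    ∃ x ∈ s, (∀ y ∈ s, f y ≤ f x) ∧ ∀ y ∈ s, f y = f x → y ≤ x := by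
  obtain ⟨x, hx, hmax⟩ := s.exists_max_image (fun y => toLex (f y, y)) hs
  refine ⟨x, hx, fun y hy => ?_, fun y hy hfy => ?_⟩
  · rcases Prod.Lex.toLex_le_toLex.mp (hmax y hy) with h | ⟨h, -⟩
    exacts [h.le, h.le]
  · rcases Prod.Lex.toLex_le_toLex.mp (hmax y hy) with h | ⟨-, h⟩
    exacts [absurd hfy h.ne, h]

lemma le_of_forall_lt_of_peak_le {f g : ℕ → ℝ} {pU pV N m T : ℕ} (hp : pV ≤ pU)
    (hf : ∀ a b, a ≤ b → b ≤ pU → f a ≤ f b)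
    (hg : ∀ a b, pV ≤ a → a ≤ b → b ≤ N → g b ≤ g a)
    (hmT : m ≤ T) (hTN : T ≤ N) (hf_lt : ∀ t, m < t → t ≤ T → f t < f m) : g T ≤ g m := by
  rcases hmT.eq_or_lt with rfl | hmT
  · exact le_rfl
  refine hg m T ?_ hmT.le hTN
  by_contra! hm
  have hmt : m < min pU T := lt_min (hm.trans_le hp) hmT
  exact (hf_lt _ hmt (min_le_right _ _)).not_ge (hf m _ hmt.le (min_le_left _ _))

namespace FinBeliefMart

variable {N : ℕ} {μ0 : ℝ} (M : FinBeliefMart N μ0)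

def Agree (k : ℕ) (ω ω' : Fin M.n) : Prop := ∀ s ≤ k, M.bel s ω' = M.bel s ω

def MeasurableAt {α : Type*} (k : ℕ) (h : Fin M.n → α) : Prop :=
  ∀ ω ω', M.Agree k ω ω' → h ω' = h ω

variable {M}

lemma MeasurableAt.mono {α : Type*} {k l : ℕ} {h : Fin M.n → α} (hh : M.MeasurableAt k h)
    (hkl : k ≤ l) : M.MeasurableAt l h :=
  fun ω ω' hω => hh ω ω' fun s hs => hω s (hs.trans hkl)

lemma measurableAt_agree (k : ℕ) (ω0 : Fin M.n) : M.MeasurableAt k (M.Agree k ω0) :=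
  fun _ _ hω => propext ⟨fun h s hs => (hω s hs).symm.trans (h s hs),
    fun h s hs => (hω s hs).trans (h s hs)⟩

lemma _root_.IsAdapted.measurableAt_lt {τ : Fin M.n → ℕ} (hτ : IsAdapted M τ) (k : ℕ) :
    M.MeasurableAt k (fun ω => k < τ ω) := by
  intro ω ω' hω
  refine propext ⟨fun hk => ?_, fun hk => ?_⟩
  · by_contra! hk'
    have := hτ ω ω' fun s hs => hω s (hs.trans hk')
    omega
  · by_contra! hk'
    have := hτ ω' ω fun s hs => (hω s (hs.trans hk')).symm
    omega

lemma agree_iff_path_eq {k : ℕ} {ω ω' : Fin M.n} :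
    M.Agree k ω ω' ↔ (fun s : Fin (k + 1) => M.bel s ω') = fun s : Fin (k + 1) => M.bel s ω := by
  refine ⟨fun h => funext fun s => h s (Nat.lt_succ_iff.mp s.isLt), fun h s hs => ?_⟩
  simpa using congrFun h ⟨s, Nat.lt_succ_of_le hs⟩

lemma sum_agree_mul_increment (k : ℕ) (ω0 : Fin M.n) :
    ∑ ω ∈ Finset.univ.filter (M.Agree k ω0), M.P ω * (M.bel (k + 1) ω - M.bel k ω) = 0 := by
  have hbel : ∀ ω ∈ Finset.univ.filter (M.Agree k ω0), M.P ω * M.bel k ω = M.bel k ω0 * M.P ω :=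
    fun ω hω => by rw [(Finset.mem_filter.mp hω).2 k le_rfl, mul_comm]
  have hmart : ∑ ω ∈ Finset.univ.filter (M.Agree k ω0), M.P ω * M.bel (k + 1) ω
      = M.bel k ω0 * ∑ ω ∈ Finset.univ.filter (M.Agree k ω0), M.P ω := by
    rw [Finset.sum_filter, Finset.sum_filter]
    convert M.mart k ω0 using 4 <;> rfl
  rw [Finset.sum_congr rfl fun ω _ => mul_sub _ _ _, Finset.sum_sub_distrib,
    Finset.sum_congr rfl hbel, ← Finset.mul_sum]
  exact sub_eq_zero.mpr hmart

lemma sum_mul_increment_eq_zero {k : ℕ} {h : Fin M.n → ℝ} (hh : M.MeasurableAt k h) :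
    ∑ ω, M.P ω * h ω * (M.bel (k + 1) ω - M.bel k ω) = 0 := by
  let path : Fin M.n → Fin (k + 1) → ℝ := fun ω s => M.bel s ω
  rw [← Finset.sum_fiberwise_of_maps_to (t := Finset.univ.image path)
    (fun ω _ => Finset.mem_image_of_mem path (Finset.mem_univ ω))]
  refine Finset.sum_eq_zero fun y hy => ?_
  obtain ⟨ω0, -, rfl⟩ := Finset.mem_image.mp hy
  have hfiber : Finset.univ.filter (fun ω => path ω = path ω0)
      = Finset.univ.filter (M.Agree k ω0) := by
    ext ω; simp only [Finset.mem_filter, agree_iff_path_eq, path]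
  rw [hfiber]
  calc _ = h ω0 * ∑ ω ∈ Finset.univ.filter (M.Agree k ω0),
          M.P ω * (M.bel (k + 1) ω - M.bel k ω) := by
        rw [Finset.mul_sum]
        refine Finset.sum_congr rfl fun ω hω => ?_
        rw [hh ω0 ω (Finset.mem_filter.mp hω).2]
        ring
    _ = 0 := by rw [sum_agree_mul_increment, mul_zero]

lemma sum_mul_bel_of_le {k t : ℕ} {h : Fin M.n → ℝ} (hh : M.MeasurableAt k h) (hkt : k ≤ t) :
    ∑ ω, M.P ω * h ω * M.bel t ω = ∑ ω, M.P ω * h ω * M.bel k ω := by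
  induction t, hkt using Nat.le_induction with
  | base => rfl
  | succ t hkt ih =>
    rw [← ih, ← sub_eq_zero, ← Finset.sum_sub_distrib, ← sum_mul_increment_eq_zero (hh.mono hkt)]
    exact Finset.sum_congr rfl fun ω _ => by ring

-- Optional stopping; no bound on `τ` is needed since the sample space is finite.
theorem sum_mul_bel_stopped {τ : Fin M.n → ℕ} (hτ : IsAdapted M τ) :
    ∑ ω, M.P ω * M.bel (τ ω) ω = μ0 := by
  have hstopped : ∀ k, ∑ ω, M.P ω * M.bel (min (τ ω) k) ω = μ0 := by
    intro k
    induction k with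
    | zero => simp only [Nat.min_zero, M.init, ← Finset.sum_mul, M.Psum, one_mul]
    | succ k ih =>
      have hstep : ∀ ω, M.bel (min (τ ω) (k + 1)) ω = M.bel (min (τ ω) k) ω
          + (if k < τ ω then 1 else 0) * (M.bel (k + 1) ω - M.bel k ω) := by
        intro ω
        split_ifs with h
        · rw [min_eq_right h, min_eq_right h.le]; ring
        · rw [min_eq_left (by omega), min_eq_left (by omega)]; ring
      have hinc := sum_mul_increment_eq_zero (k := k) (h := fun ω => if k < τ ω then (1 : ℝ) else 0)
        fun ω ω' hω => by simp only [hτ.measurableAt_lt k ω ω' hω]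
      simp only [hstep, mul_add, Finset.sum_add_distrib, ih, ← mul_assoc, hinc, add_zero]
  have hτK : ∀ ω, τ ω ≤ Finset.univ.sup τ := fun ω => Finset.le_sup (Finset.mem_univ ω)
  simpa only [min_eq_left (hτK _)] using hstopped (Finset.univ.sup τ)

lemma sum_mul_EU_of_le {k t : ℕ} {h : Fin M.n → ℝ} (hh : M.MeasurableAt k h) (hkt : k ≤ t)
    (w : Bool → ℕ → ℝ) (t' : ℕ) :
    ∑ ω, M.P ω * h ω * EU w (M.bel t ω) t' = ∑ ω, M.P ω * h ω * EU w (M.bel k ω) t' := by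
  rw [sum_mul_EU, sum_mul_EU, sum_mul_bel_of_le hh hkt]

lemma sum_mul_EU_stopped {τ : Fin M.n → ℕ} (hτ : IsAdapted M τ) (w : Bool → ℕ → ℝ) (t : ℕ) :
    ∑ ω, M.P ω * EU w (M.bel (τ ω) ω) t = EU w μ0 t := by
  rw [sum_mul_EU, M.Psum, sum_mul_bel_stopped hτ]
  unfold EU; ring

lemma agentPay_const (u : Bool → ℕ → ℝ) (c : ℝ) (τ : Fin M.n → ℕ) :
    agentPay u M (fun _ => c) τ = ∑ ω, M.P ω * EU u (M.bel (τ ω) ω) (τ ω) - c := by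
  simp only [agentPay, mul_sub, Finset.sum_sub_distrib, ← Finset.sum_mul, M.Psum, one_mul]

lemma prinPay_const (v : Bool → ℕ → ℝ) (c : ℝ) (τ : Fin M.n → ℕ) :
    prinPay v M (fun _ => c) τ = ∑ ω, M.P ω * EU v (M.bel (τ ω) ω) (τ ω) + c := by
  simp only [prinPay, mul_add, Finset.sum_add_distrib, ← Finset.sum_mul, M.Psum, one_mul]

def deviate (τ : Fin M.n → ℕ) (ω0 : Fin M.n) (t : ℕ) (ω : Fin M.n) : ℕ :=
  if M.Agree (τ ω0) ω0 ω then t else τ ω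

lemma deviate_self (τ : Fin M.n → ℕ) (ω0 : Fin M.n) (t : ℕ) : deviate τ ω0 t ω0 = t :=
  if_pos fun _ _ => rfl

lemma _root_.IsAdapted.deviate {τ : Fin M.n → ℕ} (hτ : IsAdapted M τ) {ω0 : Fin M.n} {t : ℕ}
    (ht : τ ω0 ≤ t) : IsAdapted M (deviate τ ω0 t) := by
  intro ω ω' hω
  unfold FinBeliefMart.deviate at hω ⊢
  by_cases hA : M.Agree (τ ω0) ω0 ω
  · rw [if_pos hA] at hω
    have hA' : M.Agree (τ ω0) ω0 ω' := fun s hs => (hω s (hs.trans ht)).trans (hA s hs)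
    rw [if_pos hA, if_pos hA']
  · rw [if_neg hA] at hω
    have hA' : ¬ M.Agree (τ ω0) ω0 ω' := by
      intro hA'
      refine hA fun s hs => (hω s ?_).symm.trans (hA' s hs)
      rw [← hτ ω ω' hω, hτ ω0 ω' hA']
      exact hs
    rw [if_neg hA, if_neg hA', hτ ω ω' hω]

-- Only the atom of `ω0` is affected, and on it the martingale property lets us evaluate `U`
-- at the belief of time `τ ω0` instead of time `t`.
lemma agentPay_le_deviate (u : Bool → ℕ → ℝ) (c : ℝ) {τ : Fin M.n → ℕ} (hτ : IsAdapted M τ)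
    {ω0 : Fin M.n} {t : ℕ} (ht : τ ω0 ≤ t)
    (hU : EU u (M.bel (τ ω0) ω0) (τ ω0) ≤ EU u (M.bel (τ ω0) ω0) t) :
    agentPay u M (fun _ => c) τ ≤ agentPay u M (fun _ => c) (deviate τ ω0 t) := by
  let h : Fin M.n → ℝ := fun ω => if M.Agree (τ ω0) ω0 ω then 1 else 0
  have hh : M.MeasurableAt (τ ω0) h := fun ω ω' hω => by
    simp only [h, measurableAt_agree (τ ω0) ω0 ω ω' hω]
  have hdiff : ∀ ω, M.P ω * EU u (M.bel (deviate τ ω0 t ω) ω) (deviate τ ω0 t ω)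
      - M.P ω * EU u (M.bel (τ ω) ω) (τ ω)
      = M.P ω * h ω * EU u (M.bel t ω) t
        - M.P ω * h ω * EU u (M.bel (τ ω0) ω) (τ ω0) := by
    intro ω
    by_cases hA : M.Agree (τ ω0) ω0 ω
    · simp only [deviate, h, if_pos hA, hτ ω0 ω hA]; ring
    · simp only [deviate, h, if_neg hA]; ring
  have hatom : ∀ ω, M.P ω * h ω * EU u (M.bel (τ ω0) ω) t
      - M.P ω * h ω * EU u (M.bel (τ ω0) ω) (τ ω0)
      = M.P ω * h ω * (EU u (M.bel (τ ω0) ω0) t - EU u (M.bel (τ ω0) ω0) (τ ω0)) := by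
    intro ω
    by_cases hA : M.Agree (τ ω0) ω0 ω
    · simp only [h, if_pos hA, hA (τ ω0) le_rfl]; ring
    · simp only [h, if_neg hA]; ring
  have hgain :
      0 ≤ ∑ ω, M.P ω * h ω * (EU u (M.bel (τ ω0) ω0) t - EU u (M.bel (τ ω0) ω0) (τ ω0)) :=
    Finset.sum_nonneg fun ω _ => mul_nonneg (mul_nonneg (M.Pnn ω) (by positivity))
      (sub_nonneg.mpr hU)
  rw [agentPay_const, agentPay_const, sub_le_sub_iff_right, ← sub_nonneg,
    ← Finset.sum_sub_distrib, Finset.sum_congr rfl fun ω _ => hdiff ω, Finset.sum_sub_distrib,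
    sum_mul_EU_of_le hh ht, ← Finset.sum_sub_distrib, Finset.sum_congr rfl fun ω _ => hatom ω]
  exact hgain

abbrev const (N : ℕ) {μ0 : ℝ} (hμ0 : μ0 ∈ Set.Icc (0:ℝ) 1) : FinBeliefMart N μ0 where
  n := 1
  npos := one_pos
  P _ := 1
  Pnn _ := zero_le_one
  Psum := by simp
  bel _ _ := μ0
  mem _ _ := hμ0
  init _ := rfl
  mart t ω := by
    rw [Finset.mul_sum]
    exact Finset.sum_congr rfl fun _ _ => by split_ifs <;> ring

variable {hμ0 : μ0 ∈ Set.Icc (0:ℝ) 1}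

lemma const_agentPay (u : Bool → ℕ → ℝ) (φ : ℕ → ℝ) (τ : Fin (const N hμ0).n → ℕ) :
    agentPay u (const N hμ0) φ τ = EU u μ0 (τ 0) - φ (τ 0) := by
  simp [agentPay]

lemma const_prinPay (v : Bool → ℕ → ℝ) (φ : ℕ → ℝ) (τ : Fin (const N hμ0).n → ℕ) :
    prinPay v (const N hμ0) φ τ = EU v μ0 (τ 0) + φ (τ 0) := by
  simp [prinPay]

lemma const_feasible_iff {A : Set ℕ} {τ : Fin (const N hμ0).n → ℕ} :
    Feasible (const N hμ0) A τ ↔ τ 0 ≤ N ∧ τ 0 ∈ A := by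
  simp [Feasible, IsAdapted, Fin.forall_fin_one]

end FinBeliefMart

/-- Otherwise continuing to `t` on the atom of `ω0` would be another optimum, one that stops
later, against the tie-breaking rule. -/
theorem AgentBR.EU_lt_of_lt {u : Bool → ℕ → ℝ} {N : ℕ} {μ0 : ℝ} {M : FinBeliefMart N μ0}
    {c : ℝ} {A : Set ℕ} {τ : Fin M.n → ℕ} (hbr : AgentBR u M (fun _ => c) A τ) (ω0 : Fin M.n)
    {t : ℕ} (ht : τ ω0 < t) (htA : t ∈ A) (htN : t ≤ N) :
    EU u (M.bel (τ ω0) ω0) t < EU u (M.bel (τ ω0) ω0) (τ ω0) := by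
  obtain ⟨⟨hτ, hτA⟩, hopt, htie⟩ := hbr
  by_contra! hU
  have hdev : Feasible M A (FinBeliefMart.deviate τ ω0 t) := by
    refine ⟨hτ.deviate ht.le, fun ω => ?_⟩
    unfold FinBeliefMart.deviate
    split_ifs
    exacts [⟨htN, htA⟩, hτA ω]
  have hle := htie _ hdev
    (le_antisymm (hopt _ hdev) (FinBeliefMart.agentPay_le_deviate u c hτ ht.le hU)) ω0
  rw [FinBeliefMart.deviate_self] at hle
  omega

theorem hardQuota_guarantee {N : ℕ} {u v : Bool → ℕ → ℝ} {μ0 : ℝ}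
    (hpeaks : ∀ μ ∈ Set.Icc (0:ℝ) 1, ∃ pU pV : ℕ, pV ≤ pU ∧
      (∀ a b : ℕ, a ≤ b → b ≤ pU → EU u μ a ≤ EU u μ b) ∧
      (∀ a b : ℕ, pV ≤ a → a ≤ b → b ≤ N → EU v μ b ≤ EU v μ a))
    {T : ℕ} (hT : T ≤ N) (M : FinBeliefMart N μ0) {x : ℝ}
    (hx : Outcome u v N μ0 (fun _ => EU u μ0 T - EU u μ0 0) {t | t ≤ T} M x) :
    EU u μ0 T - EU u μ0 0 + EU v μ0 T ≤ x := by
  have hconst : IsAdapted M (fun _ => T) := fun _ _ _ => rfl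
  rcases hx with ⟨τ, hbr, -, rfl⟩ | ⟨hall, -⟩
  · have hV : ∀ ω, EU v (M.bel (τ ω) ω) T ≤ EU v (M.bel (τ ω) ω) (τ ω) := fun ω => by
      obtain ⟨pU, pV, hp, hU, hV⟩ := hpeaks _ (M.mem (τ ω) ω)
      exact le_of_forall_lt_of_peak_le hp hU hV (hbr.1.2 ω).2 hT
        fun t ht htT => hbr.EU_lt_of_lt ω ht htT (htT.trans hT)
    calc EU u μ0 T - EU u μ0 0 + EU v μ0 T
        = ∑ ω, M.P ω * EU v (M.bel (τ ω) ω) T + (EU u μ0 T - EU u μ0 0) := by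
          rw [FinBeliefMart.sum_mul_EU_stopped hbr.1.1]; ring
      _ ≤ ∑ ω, M.P ω * EU v (M.bel (τ ω) ω) (τ ω) + (EU u μ0 T - EU u μ0 0) := by
          gcongr with ω
          exacts [M.Pnn ω, hV ω]
      _ = prinPay v M (fun _ => EU u μ0 T - EU u μ0 0) τ := (FinBeliefMart.prinPay_const ..).symm
  · have hpay := hall _ ⟨hconst, fun _ => ⟨hT, le_refl T⟩⟩
    rw [FinBeliefMart.agentPay_const, FinBeliefMart.sum_mul_EU_stopped hconst] at hpay
    linarith

open FinBeliefMart in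
theorem exists_outcome_le_of_const {N : ℕ} {u v : Bool → ℕ → ℝ} {μ0 : ℝ}
    (hμ0 : μ0 ∈ Set.Icc (0:ℝ) 1) {T : ℕ}
    (hTmax : ∀ t ≤ N, EU u μ0 t - EU u μ0 0 + EU v μ0 t ≤ EU u μ0 T - EU u μ0 0 + EU v μ0 T)
    (φ : ℕ → ℝ) {A : Set ℕ} (hA : ∃ t ∈ A, t ≤ N) :
    ∃ x, Outcome u v N μ0 φ A (const N hμ0) x ∧ x ≤ EU u μ0 T - EU u μ0 0 + EU v μ0 T := by
  let allowed := (Finset.range (N + 1)).filter (· ∈ A)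
  have hallowed : ∀ {t}, t ∈ allowed ↔ t ≤ N ∧ t ∈ A := by
    simp [allowed]
  obtain ⟨t0, ht0A, ht0N⟩ := hA
  obtain ⟨th, hth, hmax, htie⟩ := Finset.exists_max_image_largest
    ⟨t0, hallowed.mpr ⟨ht0N, ht0A⟩⟩ (fun t => EU u μ0 t - φ t)
  by_cases hpart : EU u μ0 0 ≤ EU u μ0 th - φ th
  · refine ⟨EU v μ0 th + φ th, Or.inl ⟨fun _ => th, ⟨const_feasible_iff.mpr (hallowed.mp hth),
      fun τ hτ => ?_, fun τ hτ heq ω => ?_⟩, ?_, by rw [const_prinPay]⟩, ?_⟩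
    · rw [const_agentPay, const_agentPay]
      exact hmax _ (hallowed.mpr (const_feasible_iff.mp hτ))
    · rw [const_agentPay, const_agentPay] at heq
      rw [Fin.fin_one_eq_zero ω]
      exact htie _ (hallowed.mpr (const_feasible_iff.mp hτ)) heq
    · rwa [const_agentPay]
    · linarith [hTmax th (hallowed.mp hth).1]
  · refine ⟨EU v μ0 0, Or.inr ⟨fun τ hτ => ?_, rfl⟩, ?_⟩
    · rw [const_agentPay]
      exact (hmax _ (hallowed.mpr (const_feasible_iff.mp hτ))).trans_lt (not_le.mp hpart)
    · linarith [hTmax 0 (Nat.zero_le N)]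

/-- Discrete-time finite-horizon main theorem.  Under single-peakedness of
`U(μ,·)` and `V(μ,·)` with the principal's peak weakly earlier, the sup-inf value of the
robust regulation problem equals `max_{t ≤ N} [U(μ0,t) − U(μ0,0) + V(μ0,t)]`, and it is
attained by the hard-quota mechanism: fixed tax `λ* = U(μ0,T*) − U(μ0,0)` for `t ≤ T*` and
`+∞` (stopping forbidden) for `t > T*`.  Part (a): the hard quota guarantees the value
against every finite belief martingale; part (b): no mechanism guarantees more. -/
theorem stmt14 (N : ℕ) (u v : Bool → ℕ → ℝ) (μ0 : ℝ) (hμ0 : μ0 ∈ Set.Icc (0:ℝ) 1)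
    (hpeaks : ∀ μ ∈ Set.Icc (0:ℝ) 1, ∃ pU pV : ℕ, pV ≤ pU ∧ pU ≤ N ∧
      (∀ a b : ℕ, a ≤ b → b ≤ pU → EU u μ a ≤ EU u μ b) ∧
      (∀ a b : ℕ, pU ≤ a → a ≤ b → b ≤ N → EU u μ b ≤ EU u μ a) ∧
      (∀ a b : ℕ, a ≤ b → b ≤ pV → EU v μ a ≤ EU v μ b) ∧
      (∀ a b : ℕ, pV ≤ a → a ≤ b → b ≤ N → EU v μ b ≤ EU v μ a))
    (Tstar : ℕ) (hT : Tstar ≤ N)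
    (hTmax : ∀ t ≤ N, EU u μ0 t - EU u μ0 0 + EU v μ0 t
      ≤ EU u μ0 Tstar - EU u μ0 0 + EU v μ0 Tstar)
    (lamstar : ℝ) (hlam : lamstar = EU u μ0 Tstar - EU u μ0 0) :
    (∀ (M : FinBeliefMart N μ0) (x : ℝ),
        Outcome u v N μ0 (fun _ => lamstar) {t | t ≤ Tstar} M x →
          EU u μ0 Tstar - EU u μ0 0 + EU v μ0 Tstar ≤ x) ∧
    (∀ (φ : ℕ → ℝ) (A : Set ℕ), (∃ t ∈ A, t ≤ N) →
        ∃ (M : FinBeliefMart N μ0) (x : ℝ), Outcome u v N μ0 φ A M x ∧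
          x ≤ EU u μ0 Tstar - EU u μ0 0 + EU v μ0 Tstar) := by
  subst hlam
  refine ⟨fun M x hx => hardQuota_guarantee (fun μ hμ => ?_) hT M hx,
    fun φ A hA => ⟨_, exists_outcome_le_of_const hμ0 hTmax φ hA⟩⟩
  obtain ⟨pU, pV, hp, -, hU, -, -, hV⟩ := hpeaks μ hμ
  exact ⟨pU, pV, hp, hU, hV⟩
end
end
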